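/- Let π : P → A be a surjective Hopf algebra map and i : A → P an algebra map with π∘i = id, ε∘i = ε, and (id⊗π)∘Ad_R∘i = (i⊗id)∘Ad_R. Then ω(a) = Σ S(i(a)₍₁₎) d(i(a)₍₂₎) satisfies ~(ω(a)) = 1⊗a − ε(a)⊗1 and Δ_R∘ω = (ω⊗id)∘Ad_R, where Δ_R = (id⊗π)∘Δ is the pushout coaction on P. -/
import Mathlib

/- STATEMENT 19: Let π : P → A be a surjective Hopf algebra map and i : A → P
an algebra map with π∘i = id, ε∘i = ε, and (id⊗π)∘Ad_R∘i = (i⊗id)∘Ad_R.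
Then ω(a) = Σ S(i(a)₍₁₎) d(i(a)₍₂₎) satisfies ~(ω(a)) = 1⊗a − ε(a)⊗1 and
Δ_R∘ω = (ω⊗id)∘Ad_R, where Δ_R = (id⊗π)∘Δ is the pushout coaction on P and
the universal calculus is used on P. -/

open TensorProduct

/-- Right adjoint coaction of a Hopf algebra H on itself. -/
noncomputable def AdR (k H : Type*) [Field k] [Ring H] [HopfAlgebra k H] :
    H →ₗ[k] H ⊗[k] H :=
  (LinearMap.lTensor H (LinearMap.mul' k H)) ∘ₗ
    (TensorProduct.assoc k H H H).toLinearMap ∘ₗ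
    (LinearMap.rTensor H (TensorProduct.comm k H H).toLinearMap) ∘ₗ
    (TensorProduct.assoc k H H H).symm.toLinearMap ∘ₗ
    (LinearMap.rTensor (H ⊗[k] H) (HopfAlgebra.antipode (R := k) (A := H))) ∘ₗ
    (LinearMap.lTensor H (Coalgebra.comul (R := k) (A := H))) ∘ₗ
    (Coalgebra.comul (R := k) (A := H))

noncomputable def dUniv (k P : Type*) [Field k] [Ring P] [Algebra k P] :
    P →ₗ[k] P ⊗[k] P :=
  TensorProduct.mk k P P 1 - (TensorProduct.mk k P P).flip 1

noncomputable def leftAct (k P : Type*) [Field k] [Ring P] [Algebra k P] :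
    P ⊗[k] (P ⊗[k] P) →ₗ[k] P ⊗[k] P :=
  (LinearMap.rTensor P (LinearMap.mul' k P)) ∘ₗ
    (TensorProduct.assoc k P P P).symm.toLinearMap

set_option maxHeartbeats 1000000
set_option synthInstance.maxHeartbeats 1000000

open TensorProduct Coalgebra HopfAlgebra LinearMap

namespace Stmt19

variable {k : Type*} [Field k]

section helpers

variable {A B C D X Y Z W : Type*}
  [AddCommGroup A] [Module k A] [AddCommGroup B] [Module k B]
  [AddCommGroup C] [Module k C] [AddCommGroup D] [Module k D]
  [AddCommGroup X] [Module k X] [AddCommGroup Y] [Module k Y]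
  [AddCommGroup Z] [Module k Z] [AddCommGroup W] [Module k W]

/-- Naturality of `leftComm` in the middle argument. -/
lemma natLeftComm (g : B →ₗ[k] X) :
    (TensorProduct.leftComm k A X C).toLinearMap ∘ₗ lTensor A (rTensor C g) =
      rTensor (A ⊗[k] C) g ∘ₗ (TensorProduct.leftComm k A B C).toLinearMap := by
  apply TensorProduct.ext'
  intro a bc
  induction bc using TensorProduct.induction_on with
  | zero => simp
  | tmul b c => simp [TensorProduct.leftComm]
  | add u v hu hv => simp only [tmul_add, map_add, hu, hv]

/-- Naturality of `assoc.symm` in the last argument. -/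
lemma natAssocSymm3 (g : C →ₗ[k] X) :
    lTensor (A ⊗[k] B) g ∘ₗ (TensorProduct.assoc k A B C).symm.toLinearMap =
      (TensorProduct.assoc k A B X).symm.toLinearMap ∘ₗ lTensor A (lTensor B g) := by
  apply TensorProduct.ext'
  intro a bc
  induction bc using TensorProduct.induction_on with
  | zero => simp
  | tmul b c => simp
  | add u v hu hv => simp only [tmul_add, map_add, hu, hv]

/-- Move a map on the first two factors past `assoc.symm` while applying a map
on the last factor. -/
lemma natAssocSymmMix (F : A ⊗[k] B →ₗ[k] D) (g : C →ₗ[k] X) :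
    lTensor D g ∘ₗ rTensor C F ∘ₗ (TensorProduct.assoc k A B C).symm.toLinearMap =
      rTensor X F ∘ₗ (TensorProduct.assoc k A B X).symm.toLinearMap ∘ₗ
        lTensor A (lTensor B g) := by
  apply TensorProduct.ext'
  intro a bc
  induction bc using TensorProduct.induction_on with
  | zero => simp
  | tmul b c => simp
  | add u v hu hv => simp only [tmul_add, map_add, hu, hv]

end helpers


variable {k H M : Type*} [Field k] [Ring H] [HopfAlgebra k H] [Ring M] [Algebra k M]

/-- Convolution product on linear maps from a Hopf algebra to an algebra. -/
noncomputable def conv (f g : H →ₗ[k] M) : H →ₗ[k] M :=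
  LinearMap.mul' k M ∘ₗ TensorProduct.map f g ∘ₗ comul

/-- Convolution unit. -/
noncomputable def convUnit : H →ₗ[k] M := Algebra.linearMap k M ∘ₗ counit

lemma conv_apply (f g : H →ₗ[k] M) (u : H) :
    conv f g u = LinearMap.mul' k M (TensorProduct.map f g (comul u)) := rfl

lemma conv_unit_right (f : H →ₗ[k] M) : conv f convUnit = f := by
  ext u
  rw [conv_apply, convUnit, ← map_comp_lTensor, LinearMap.comp_apply,
    lTensor_counit_comul, map_tmul]
  simp

lemma conv_unit_left (f : H →ₗ[k] M) : conv convUnit f = f := by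
  ext u
  rw [conv_apply, convUnit, ← map_comp_rTensor, LinearMap.comp_apply,
    rTensor_counit_comul, map_tmul]
  simp

lemma conv_assoc (f g h' : H →ₗ[k] M) : conv (conv f g) h' = conv f (conv g h') := by
  ext u
  have strL : LinearMap.mul' k M ∘ₗ
      TensorProduct.map (LinearMap.mul' k M ∘ₗ TensorProduct.map f g) h' ∘ₗ
      (TensorProduct.assoc k H H H).symm.toLinearMap =
      LinearMap.mul' k M ∘ₗ
        TensorProduct.map f (LinearMap.mul' k M ∘ₗ TensorProduct.map g h') := by
    apply TensorProduct.ext'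
    intro x yz
    induction yz using TensorProduct.induction_on with
    | zero => simp only [tmul_zero, map_zero]
    | tmul y z => simp [mul_assoc]
    | add u v hu hv => simp only [tmul_add, map_add, hu, hv]
  have e1 : conv f g = (LinearMap.mul' k M ∘ₗ TensorProduct.map f g) ∘ₗ comul := by
    rw [conv, LinearMap.comp_assoc]
  have e2 : conv g h' = (LinearMap.mul' k M ∘ₗ TensorProduct.map g h') ∘ₗ comul := by
    rw [conv, LinearMap.comp_assoc]
  calc conv (conv f g) h' u
      = LinearMap.mul' k M
          ((TensorProduct.map (LinearMap.mul' k M ∘ₗ TensorProduct.map f g) h' ∘ₗ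
            rTensor H comul) (comul u)) := by
        rw [conv_apply, e1, ← map_comp_rTensor]
    _ = LinearMap.mul' k M
          (TensorProduct.map (LinearMap.mul' k M ∘ₗ TensorProduct.map f g) h'
            ((TensorProduct.assoc k H H H).symm ((comul (R := k)).lTensor H (comul u)))) := by
        rw [LinearMap.comp_apply, ← coassoc_symm_apply]
    _ = (LinearMap.mul' k M ∘ₗ
          TensorProduct.map (LinearMap.mul' k M ∘ₗ TensorProduct.map f g) h' ∘ₗ
          (TensorProduct.assoc k H H H).symm.toLinearMap)
            ((comul (R := k)).lTensor H (comul u)) := rfl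
    _ = (LinearMap.mul' k M ∘ₗ
          TensorProduct.map f (LinearMap.mul' k M ∘ₗ TensorProduct.map g h'))
            ((comul (R := k)).lTensor H (comul u)) := by rw [strL]
    _ = conv f (conv g h') u := by
        conv_rhs => rw [conv_apply, e2, ← map_comp_lTensor]
        rfl

lemma conv_inv_unique {f g h' : H →ₗ[k] M} (h1 : conv f g = convUnit)
    (h2 : conv g h' = convUnit) : f = h' := by
  have := conv_assoc f g h'
  rw [h1, h2, conv_unit_left, conv_unit_right] at this
  exact this.symm



section CA
variable {k H : Type*} [Field k] [Ring H] [HopfAlgebra k H]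

local notation "S" => HopfAlgebra.antipode (R := k) (A := H)
local notation "Δ" => Coalgebra.comul (R := k) (A := H)
local notation "ε" => Coalgebra.counit (R := k) (A := H)
local notation "m" => LinearMap.mul' k H

lemma mul_comp_map_comul :
    LinearMap.mul' k (H ⊗[k] H) ∘ₗ TensorProduct.map Δ Δ = Δ ∘ₗ LinearMap.mul' k H := by
  apply TensorProduct.ext'
  intro x y
  simp [Bialgebra.comul_mul]

lemma conv_comul_comulAntipode :
    conv (Δ : H →ₗ[k] H ⊗[k] H) ((Δ : H →ₗ[k] H ⊗[k] H) ∘ₗ S) = convUnit := by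
  ext u
  calc conv (Δ : H →ₗ[k] H ⊗[k] H) ((Δ : H →ₗ[k] H ⊗[k] H) ∘ₗ S) u
      = LinearMap.mul' k (H ⊗[k] H)
          ((TensorProduct.map Δ Δ ∘ₗ lTensor H S) (comul u)) := by
        rw [conv_apply, map_comp_lTensor]
    _ = (LinearMap.mul' k (H ⊗[k] H) ∘ₗ TensorProduct.map Δ Δ)
          ((lTensor H S) (comul u)) := rfl
    _ = Δ (m ((lTensor H S) (comul u))) := by rw [mul_comp_map_comul]; rfl
    _ = Δ (algebraMap k H (ε u)) := by
        rw [mul_antipode_lTensor_comul_apply]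
    _ = convUnit u := by
        rw [Bialgebra.comul_algebraMap]; rfl

lemma conv_antiSwap_comul :
    conv (TensorProduct.map S S ∘ₗ (TensorProduct.comm k H H).toLinearMap ∘ₗ Δ)
      (Δ : H →ₗ[k] H ⊗[k] H) = convUnit := by
  ext u
  set τSS : H ⊗[k] H →ₗ[k] H ⊗[k] H :=
    TensorProduct.map S S ∘ₗ (TensorProduct.comm k H H).toLinearMap with hτSS
  have e1 : TensorProduct.map S S ∘ₗ (TensorProduct.comm k H H).toLinearMap ∘ₗ Δ =
      τSS ∘ₗ Δ := by rw [hτSS, LinearMap.comp_assoc]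
  -- structural lemma [c5s2']
  have str1 : LinearMap.mul' k (H ⊗[k] H) ∘ₗ rTensor (H ⊗[k] H) τSS ∘ₗ
      (TensorProduct.assoc k H H (H ⊗[k] H)).symm.toLinearMap ∘ₗ
      lTensor H (TensorProduct.assoc k H H H).toLinearMap =
      TensorProduct.map (m ∘ₗ rTensor H S) (m ∘ₗ rTensor H S) ∘ₗ
        (TensorProduct.leftComm k H (H ⊗[k] H) H).toLinearMap := by
    apply TensorProduct.ext'
    intro x v
    induction v using TensorProduct.induction_on with
    | zero => simp only [tmul_zero, LinearMap.map_zero]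
    | add a b ha hb => simp only [tmul_add, LinearMap.map_add, ha, hb]
    | tmul w z =>
      induction w using TensorProduct.induction_on with
      | zero => simp only [zero_tmul, tmul_zero, LinearMap.map_zero]
      | add a b ha hb => simp only [add_tmul, tmul_add, LinearMap.map_add, ha, hb]
      | tmul y z' =>
        simp [hτSS, TensorProduct.leftComm, Algebra.TensorProduct.tmul_mul_tmul]
  -- structural lemma [c5s3]
  have str2 : TensorProduct.map (Algebra.linearMap k H) (m ∘ₗ rTensor H S) ∘ₗ
      (TensorProduct.leftComm k H k H).toLinearMap ∘ₗ
      lTensor H ((TensorProduct.mk k k H) 1) =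
      (TensorProduct.mk k H H) 1 ∘ₗ m ∘ₗ rTensor H S := by
    apply TensorProduct.ext'
    intro x y
    simp [TensorProduct.leftComm]
  have hax : m ∘ₗ rTensor H S ∘ₗ Δ = Algebra.linearMap k H ∘ₗ ε :=
    mul_antipode_rTensor_comul
  have hax' : (m ∘ₗ rTensor H S) ∘ₗ Δ = Algebra.linearMap k H ∘ₗ ε := by
    rw [LinearMap.comp_assoc]; exact hax
  calc conv (TensorProduct.map S S ∘ₗ (TensorProduct.comm k H H).toLinearMap ∘ₗ Δ)
        (Δ : H →ₗ[k] H ⊗[k] H) u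
      = LinearMap.mul' k (H ⊗[k] H)
          ((TensorProduct.map τSS Δ ∘ₗ rTensor H Δ) (comul u)) := by
        rw [conv_apply, e1, map_comp_rTensor]
    _ = LinearMap.mul' k (H ⊗[k] H) (TensorProduct.map τSS Δ
          ((TensorProduct.assoc k H H H).symm ((Δ).lTensor H (comul u)))) := by
        rw [LinearMap.comp_apply, ← coassoc_symm_apply]
    _ = (LinearMap.mul' k (H ⊗[k] H) ∘ₗ (lTensor (H ⊗[k] H) Δ ∘ₗ rTensor H τSS ∘ₗ
          (TensorProduct.assoc k H H H).symm.toLinearMap))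
          ((Δ).lTensor H (comul u)) := by
        rw [← lTensor_comp_rTensor (g := (Δ : H →ₗ[k] H ⊗[k] H)) (f := τSS)]
        rfl
    _ = (LinearMap.mul' k (H ⊗[k] H) ∘ₗ (rTensor (H ⊗[k] H) τSS ∘ₗ
          (TensorProduct.assoc k H H (H ⊗[k] H)).symm.toLinearMap ∘ₗ
          lTensor H (lTensor H Δ)))
          ((Δ).lTensor H (comul u)) := by
        rw [natAssocSymmMix (F := τSS) (g := (Δ : H →ₗ[k] H ⊗[k] H))]
    _ = LinearMap.mul' k (H ⊗[k] H) (rTensor (H ⊗[k] H) τSS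
          ((TensorProduct.assoc k H H (H ⊗[k] H)).symm
          (lTensor H (TensorProduct.assoc k H H H).toLinearMap
          (lTensor H ((Δ).rTensor H) ((Δ).lTensor H (comul u)))))) := by
        have hX : lTensor H (lTensor H Δ) ((Δ).lTensor H (comul u)) =
            lTensor H (TensorProduct.assoc k H H H).toLinearMap
              (lTensor H ((Δ).rTensor H) ((Δ).lTensor H (comul u))) := by
          rw [← LinearMap.lTensor_comp_apply, ← LinearMap.lTensor_comp_apply,
            ← LinearMap.lTensor_comp_apply]
          have hcm : (lTensor H (Δ)) ∘ₗ (Δ : H →ₗ[k] H ⊗[k] H) =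
              ((TensorProduct.assoc k H H H).toLinearMap ∘ₗ (Δ).rTensor H) ∘ₗ
                (Δ : H →ₗ[k] H ⊗[k] H) := by
            rw [LinearMap.comp_assoc]; exact Coalgebra.coassoc.symm
          rw [hcm]
        simp only [LinearMap.comp_apply]
        rw [hX]
        rfl
    _ = (TensorProduct.map (m ∘ₗ rTensor H S) (m ∘ₗ rTensor H S) ∘ₗ
          (TensorProduct.leftComm k H (H ⊗[k] H) H).toLinearMap)
          (lTensor H ((Δ).rTensor H) ((Δ).lTensor H (comul u))) := by
        rw [← str1]; rfl
    _ = TensorProduct.map (m ∘ₗ rTensor H S) (m ∘ₗ rTensor H S)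
          (rTensor (H ⊗[k] H) Δ
            ((TensorProduct.leftComm k H H H).toLinearMap ((Δ).lTensor H (comul u)))) := by
        rw [LinearMap.comp_apply, ← LinearMap.comp_apply
          (f := (TensorProduct.leftComm k H (H ⊗[k] H) H).toLinearMap),
          natLeftComm (g := (Δ : H →ₗ[k] H ⊗[k] H))]
        rfl
    _ = TensorProduct.map (Algebra.linearMap k H ∘ₗ ε) (m ∘ₗ rTensor H S)
          ((TensorProduct.leftComm k H H H).toLinearMap ((Δ).lTensor H (comul u))) := by
        rw [← LinearMap.comp_apply, map_comp_rTensor, hax']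
    _ = TensorProduct.map (Algebra.linearMap k H) (m ∘ₗ rTensor H S)
          (rTensor (H ⊗[k] H) ε
            ((TensorProduct.leftComm k H H H).toLinearMap ((Δ).lTensor H (comul u)))) := by
        rw [← map_comp_rTensor]; rfl
    _ = TensorProduct.map (Algebra.linearMap k H) (m ∘ₗ rTensor H S)
          ((TensorProduct.leftComm k H k H).toLinearMap
            (lTensor H ((ε).rTensor H) ((Δ).lTensor H (comul u)))) := by
        rw [← LinearMap.comp_apply (f := rTensor (H ⊗[k] H) ε),
          ← natLeftComm (g := (ε : H →ₗ[k] k))]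
        rfl
    _ = TensorProduct.map (Algebra.linearMap k H) (m ∘ₗ rTensor H S)
          ((TensorProduct.leftComm k H k H).toLinearMap
            (lTensor H ((TensorProduct.mk k k H) 1) (comul u))) := by
        rw [← LinearMap.lTensor_comp_apply, Coalgebra.rTensor_counit_comp_comul]
    _ = ((TensorProduct.mk k H H) 1 ∘ₗ m ∘ₗ rTensor H S) (comul u) := by
        rw [← str2]; rfl
    _ = (1 : H) ⊗ₜ[k] (algebraMap k H (ε u)) := by
        rw [LinearMap.comp_apply, LinearMap.comp_apply,
          mul_antipode_rTensor_comul_apply]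
        rfl
    _ = convUnit u := by
        simp [convUnit, Algebra.TensorProduct.one_def,
          Algebra.algebraMap_eq_smul_one (R := k) (A := H ⊗[k] H), tmul_smul,
          Algebra.algebraMap_eq_smul_one (R := k) (A := H)]

/-- The antipode is an anti-coalgebra morphism. -/
theorem comul_comp_antipode :
    (Δ : H →ₗ[k] H ⊗[k] H) ∘ₗ S =
      TensorProduct.map S S ∘ₗ (TensorProduct.comm k H H).toLinearMap ∘ₗ Δ :=
  (conv_inv_unique conv_antiSwap_comul conv_comul_comulAntipode).symm

end CA


section AdRLemmas
variable {k H : Type*} [Field k] [Ring H] [HopfAlgebra k H]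

/-- The structural part of the adjoint coaction. -/
noncomputable def AdM (k H : Type*) [Field k] [Ring H] [HopfAlgebra k H] :
    H ⊗[k] (H ⊗[k] H) →ₗ[k] H ⊗[k] H :=
  (LinearMap.lTensor H (LinearMap.mul' k H)) ∘ₗ
    (TensorProduct.assoc k H H H).toLinearMap ∘ₗ
    (LinearMap.rTensor H (TensorProduct.comm k H H).toLinearMap) ∘ₗ
    (TensorProduct.assoc k H H H).symm.toLinearMap ∘ₗ
    (LinearMap.rTensor (H ⊗[k] H) (HopfAlgebra.antipode (R := k) (A := H)))

lemma AdR_eq_AdM (u : H) :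
    AdR k H u = AdM k H ((Coalgebra.comul (R := k)).lTensor H (Coalgebra.comul u)) := by
  simp only [AdR, AdM, LinearMap.comp_apply]

lemma AdM_tmul (x y z : H) :
    AdM k H (x ⊗ₜ[k] (y ⊗ₜ[k] z)) =
      y ⊗ₜ[k] (HopfAlgebra.antipode (R := k) x * z) := by
  simp [AdM, TensorProduct.assoc_symm_tmul, TensorProduct.assoc_tmul,
    LinearMap.mul'_apply]

lemma counit_rTensor_AdR (u : H) :
    (Coalgebra.counit (R := k)).rTensor H (AdR k H u) =
      (1 : k) ⊗ₜ[k] (algebraMap k H (Coalgebra.counit u)) := by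
  have nat3 : (Coalgebra.counit (R := k)).rTensor H ∘ₗ AdM k H =
      (LinearMap.lTensor k (LinearMap.mul' k H ∘ₗ
        LinearMap.rTensor H (HopfAlgebra.antipode (R := k)))) ∘ₗ
      (TensorProduct.leftComm k H k H).toLinearMap ∘ₗ
      LinearMap.lTensor H ((Coalgebra.counit (R := k)).rTensor H) := by
    apply TensorProduct.ext'
    intro x v
    induction v using TensorProduct.induction_on with
    | zero => simp only [tmul_zero, LinearMap.map_zero]
    | add a b ha hb => simp only [tmul_add, LinearMap.map_add, ha, hb]
    | tmul y z =>
      simp [AdM, TensorProduct.assoc_symm_tmul, TensorProduct.assoc_tmul,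
        LinearMap.mul'_apply, TensorProduct.leftComm_tmul, smul_tmul,
        TensorProduct.smul_tmul']
  have nat4 : (LinearMap.lTensor k (LinearMap.mul' k H ∘ₗ
        LinearMap.rTensor H (HopfAlgebra.antipode (R := k)))) ∘ₗ
      (TensorProduct.leftComm k H k H).toLinearMap ∘ₗ
      LinearMap.lTensor H ((TensorProduct.mk k k H) 1) =
      (TensorProduct.mk k k H) 1 ∘ₗ LinearMap.mul' k H ∘ₗ
        LinearMap.rTensor H (HopfAlgebra.antipode (R := k)) := by
    apply TensorProduct.ext'
    intro x z
    simp [TensorProduct.leftComm_tmul, LinearMap.mul'_apply]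
  calc (Coalgebra.counit (R := k)).rTensor H (AdR k H u)
      = ((Coalgebra.counit (R := k)).rTensor H ∘ₗ AdM k H)
          ((Coalgebra.comul (R := k)).lTensor H (Coalgebra.comul u)) := by
        rw [AdR_eq_AdM]; rfl
    _ = ((LinearMap.lTensor k (LinearMap.mul' k H ∘ₗ
          LinearMap.rTensor H (HopfAlgebra.antipode (R := k)))) ∘ₗ
          (TensorProduct.leftComm k H k H).toLinearMap)
          (LinearMap.lTensor H ((Coalgebra.counit (R := k)).rTensor H)
            ((Coalgebra.comul (R := k)).lTensor H (Coalgebra.comul u))) := by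
        rw [nat3]; rfl
    _ = ((LinearMap.lTensor k (LinearMap.mul' k H ∘ₗ
          LinearMap.rTensor H (HopfAlgebra.antipode (R := k)))) ∘ₗ
          (TensorProduct.leftComm k H k H).toLinearMap)
          (LinearMap.lTensor H ((TensorProduct.mk k k H) 1) (Coalgebra.comul u)) := by
        rw [← LinearMap.lTensor_comp_apply,
          Coalgebra.rTensor_counit_comp_comul]
    _ = ((TensorProduct.mk k k H) 1 ∘ₗ LinearMap.mul' k H ∘ₗ
          LinearMap.rTensor H (HopfAlgebra.antipode (R := k))) (Coalgebra.comul u) := by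
        rw [← nat4]; rfl
    _ = (1 : k) ⊗ₜ[k] (algebraMap k H (Coalgebra.counit u)) := by
        rw [LinearMap.comp_apply, LinearMap.comp_apply,
          mul_antipode_rTensor_comul_apply]
        rfl

end AdRLemmas


section Main
variable {k A P : Type*} [Field k] [Ring A] [HopfAlgebra k A] [Ring P] [HopfAlgebra k P]

/-- The map `u ↦ Σ S(u₁) ⊗ u₂`. -/
noncomputable def psi (k P : Type*) [Field k] [Ring P] [HopfAlgebra k P] :
    P →ₗ[k] P ⊗[k] P :=
  LinearMap.rTensor P (HopfAlgebra.antipode (R := k)) ∘ₗ Coalgebra.comul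

lemma mul_antipode_comp (k P : Type*) [Field k] [Ring P] [HopfAlgebra k P] :
    (LinearMap.mul' k P ∘ₗ LinearMap.rTensor P (HopfAlgebra.antipode (R := k))) ∘ₗ
      (Coalgebra.comul (R := k) (A := P)) =
      Algebra.linearMap k P ∘ₗ Coalgebra.counit := by
  rw [LinearMap.comp_assoc]; exact mul_antipode_rTensor_comul

lemma omega_apply (i : A →ₐ[k] P) (a : A) :
    ((leftAct k P) ∘ₗ
      (TensorProduct.map (HopfAlgebra.antipode (R := k) (A := P))
        (dUniv k P)) ∘ₗ (Coalgebra.comul (R := k) (A := P)) ∘ₗ i.toLinearMap) a =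
      psi k P (i a) -
        (Coalgebra.counit (R := k) (i a)) • ((1 : P) ⊗ₜ[k] (1 : P)) := by
  have str : leftAct k P ∘ₗ
      TensorProduct.map (HopfAlgebra.antipode (R := k) (A := P)) (dUniv k P) =
      LinearMap.rTensor P (HopfAlgebra.antipode (R := k)) -
        ((TensorProduct.mk k P P).flip 1) ∘ₗ LinearMap.mul' k P ∘ₗ
          LinearMap.rTensor P (HopfAlgebra.antipode (R := k)) := by
    apply TensorProduct.ext'
    intro x y
    simp [leftAct, dUniv, TensorProduct.assoc_symm_tmul, LinearMap.mul'_apply,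
      tmul_sub, sub_tmul]
  calc ((leftAct k P) ∘ₗ
      (TensorProduct.map (HopfAlgebra.antipode (R := k) (A := P))
        (dUniv k P)) ∘ₗ (Coalgebra.comul (R := k) (A := P)) ∘ₗ i.toLinearMap) a
      = (leftAct k P ∘ₗ
          TensorProduct.map (HopfAlgebra.antipode (R := k) (A := P)) (dUniv k P))
          (Coalgebra.comul (i a)) := by
        simp only [LinearMap.comp_apply, AlgHom.toLinearMap_apply]
    _ = LinearMap.rTensor P (HopfAlgebra.antipode (R := k)) (Coalgebra.comul (i a)) -
          ((TensorProduct.mk k P P).flip 1)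
            (LinearMap.mul' k P
              (LinearMap.rTensor P (HopfAlgebra.antipode (R := k))
                (Coalgebra.comul (i a)))) := by
        rw [str]; rfl
    _ = psi k P (i a) -
          (Coalgebra.counit (R := k) (i a)) • ((1 : P) ⊗ₜ[k] (1 : P)) := by
        rw [mul_antipode_rTensor_comul_apply]
        simp [psi, Algebra.algebraMap_eq_smul_one, TensorProduct.smul_tmul']

lemma tilde_psi (π : P →ₐ[k] A) (u : P) :
    ((LinearMap.rTensor A (LinearMap.mul' k P)) ∘ₗ
      (TensorProduct.assoc k P P A).symm.toLinearMap ∘ₗ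
      (LinearMap.lTensor P ((LinearMap.lTensor P π.toLinearMap) ∘ₗ
        (Coalgebra.comul (R := k) (A := P))))) (psi k P u) =
      (1 : P) ⊗ₜ[k] π u := by
  have str2 : LinearMap.rTensor A (LinearMap.mul' k P) ∘ₗ
      (TensorProduct.assoc k P P A).symm.toLinearMap ∘ₗ
      TensorProduct.map (HopfAlgebra.antipode (R := k) (A := P))
        (LinearMap.lTensor P π.toLinearMap) ∘ₗ
      (TensorProduct.assoc k P P P).toLinearMap =
      TensorProduct.map
        (LinearMap.mul' k P ∘ₗ LinearMap.rTensor P (HopfAlgebra.antipode (R := k)))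
        π.toLinearMap := by
    apply TensorProduct.ext'
    intro v z
    induction v using TensorProduct.induction_on with
    | zero => simp only [zero_tmul, LinearMap.map_zero]
    | add a b ha hb => simp only [add_tmul, LinearMap.map_add, ha, hb]
    | tmul x y =>
      simp [TensorProduct.assoc_tmul, TensorProduct.assoc_symm_tmul,
        LinearMap.mul'_apply]
  calc ((LinearMap.rTensor A (LinearMap.mul' k P)) ∘ₗ
      (TensorProduct.assoc k P P A).symm.toLinearMap ∘ₗ
      (LinearMap.lTensor P ((LinearMap.lTensor P π.toLinearMap) ∘ₗ
        (Coalgebra.comul (R := k) (A := P))))) (psi k P u)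
      = ((LinearMap.rTensor A (LinearMap.mul' k P)) ∘ₗ
          (TensorProduct.assoc k P P A).symm.toLinearMap)
          ((TensorProduct.map (HopfAlgebra.antipode (R := k) (A := P))
            ((LinearMap.lTensor P π.toLinearMap) ∘ₗ
              (Coalgebra.comul (R := k) (A := P)))) (Coalgebra.comul u)) := by
        simp only [psi, LinearMap.comp_apply]
        rw [← LinearMap.comp_apply (f := LinearMap.lTensor P _),
          lTensor_comp_rTensor]
    _ = ((LinearMap.rTensor A (LinearMap.mul' k P)) ∘ₗ
          (TensorProduct.assoc k P P A).symm.toLinearMap)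
          ((TensorProduct.map (HopfAlgebra.antipode (R := k) (A := P))
            (LinearMap.lTensor P π.toLinearMap))
            ((Coalgebra.comul (R := k)).lTensor P (Coalgebra.comul u))) := by
        rw [← map_comp_lTensor]; rfl
    _ = ((LinearMap.rTensor A (LinearMap.mul' k P)) ∘ₗ
          (TensorProduct.assoc k P P A).symm.toLinearMap)
          ((TensorProduct.map (HopfAlgebra.antipode (R := k) (A := P))
            (LinearMap.lTensor P π.toLinearMap))
            ((TensorProduct.assoc k P P P)
              ((Coalgebra.comul (R := k)).rTensor P (Coalgebra.comul u)))) := by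
        rw [Coalgebra.coassoc_apply]
    _ = (TensorProduct.map
          (LinearMap.mul' k P ∘ₗ LinearMap.rTensor P (HopfAlgebra.antipode (R := k)))
          π.toLinearMap)
          ((Coalgebra.comul (R := k)).rTensor P (Coalgebra.comul u)) := by
        rw [← str2]; rfl
    _ = (TensorProduct.map
          ((LinearMap.mul' k P ∘ₗ LinearMap.rTensor P (HopfAlgebra.antipode (R := k))) ∘ₗ
            Coalgebra.comul)
          π.toLinearMap) (Coalgebra.comul u) := by
        rw [← LinearMap.comp_apply, map_comp_rTensor]
    _ = (TensorProduct.map (Algebra.linearMap k P ∘ₗ Coalgebra.counit)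
          π.toLinearMap) (Coalgebra.comul u) := by
        rw [mul_antipode_comp]
    _ = (TensorProduct.map (Algebra.linearMap k P) π.toLinearMap)
          ((Coalgebra.counit (R := k)).rTensor P (Coalgebra.comul u)) := by
        rw [← map_comp_rTensor]
        rfl
    _ = (1 : P) ⊗ₜ[k] π u := by
        rw [Coalgebra.rTensor_counit_comul]
        simp

lemma tilde_one (π : P →ₐ[k] A) :
    ((LinearMap.rTensor A (LinearMap.mul' k P)) ∘ₗ
      (TensorProduct.assoc k P P A).symm.toLinearMap ∘ₗ
      (LinearMap.lTensor P ((LinearMap.lTensor P π.toLinearMap) ∘ₗ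
        (Coalgebra.comul (R := k) (A := P))))) ((1 : P) ⊗ₜ[k] (1 : P)) =
      (1 : P) ⊗ₜ[k] (1 : A) := by
  simp [LinearMap.comp_apply, Bialgebra.comul_one, Algebra.TensorProduct.one_def,
    TensorProduct.assoc_symm_tmul, LinearMap.mul'_apply]


variable (π : P →ₐ[k] A)

/-- Structural part of the right-hand side of the main covariance identity. -/
noncomputable def Nmap : P ⊗[k] ((P ⊗[k] P) ⊗[k] P) →ₗ[k] (P ⊗[k] P) ⊗[k] A :=
  TensorProduct.map (LinearMap.rTensor P (HopfAlgebra.antipode (R := k)))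
      (π.toLinearMap ∘ₗ LinearMap.mul' k P ∘ₗ
        LinearMap.rTensor P (HopfAlgebra.antipode (R := k))) ∘ₗ
    (TensorProduct.leftComm k P (P ⊗[k] P) P).toLinearMap

/-- The common normal form. -/
noncomputable def Fmap : P ⊗[k] (P ⊗[k] (P ⊗[k] P)) →ₗ[k] (P ⊗[k] P) ⊗[k] A :=
  Nmap π ∘ₗ LinearMap.lTensor P (TensorProduct.assoc k P P P).symm.toLinearMap

lemma diag_one :
    ((LinearMap.lTensor (P ⊗[k] P) (LinearMap.mul' k A)) ∘ₗ
      (TensorProduct.tensorTensorTensorComm k P A P A).toLinearMap ∘ₗ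
      (TensorProduct.map
        ((LinearMap.lTensor P π.toLinearMap) ∘ₗ (Coalgebra.comul (R := k) (A := P)))
        ((LinearMap.lTensor P π.toLinearMap) ∘ₗ (Coalgebra.comul (R := k) (A := P)))))
      ((1 : P) ⊗ₜ[k] (1 : P)) = ((1 : P) ⊗ₜ[k] (1 : P)) ⊗ₜ[k] (1 : A) := by
  simp [LinearMap.comp_apply, Bialgebra.comul_one, Algebra.TensorProduct.one_def,
    TensorProduct.tensorTensorTensorComm_tmul, LinearMap.mul'_apply]

lemma diag_psi (u : P) :
    ((LinearMap.lTensor (P ⊗[k] P) (LinearMap.mul' k A)) ∘ₗ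
      (TensorProduct.tensorTensorTensorComm k P A P A).toLinearMap ∘ₗ
      (TensorProduct.map
        ((LinearMap.lTensor P π.toLinearMap) ∘ₗ (Coalgebra.comul (R := k) (A := P)))
        ((LinearMap.lTensor P π.toLinearMap) ∘ₗ (Coalgebra.comul (R := k) (A := P)))))
      (psi k P u) =
      (psi k P).rTensor A ((LinearMap.lTensor P π.toLinearMap) (AdR k P u)) := by
  have hCA : ((LinearMap.lTensor P π.toLinearMap) ∘ₗ
        (Coalgebra.comul (R := k) (A := P))) ∘ₗ (HopfAlgebra.antipode (R := k)) =
      ((LinearMap.lTensor P π.toLinearMap) ∘ₗ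
        TensorProduct.map (HopfAlgebra.antipode (R := k))
          (HopfAlgebra.antipode (R := k)) ∘ₗ
        (TensorProduct.comm k P P).toLinearMap) ∘ₗ
        (Coalgebra.comul (R := k) (A := P)) := by
    rw [LinearMap.comp_assoc, comul_comp_antipode]
    simp only [LinearMap.comp_assoc]
  have str6 : (LinearMap.lTensor (P ⊗[k] P) (LinearMap.mul' k A)) ∘ₗ
      (TensorProduct.tensorTensorTensorComm k P A P A).toLinearMap ∘ₗ
      TensorProduct.map
        ((LinearMap.lTensor P π.toLinearMap) ∘ₗ
          TensorProduct.map (HopfAlgebra.antipode (R := k))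
            (HopfAlgebra.antipode (R := k)) ∘ₗ
          (TensorProduct.comm k P P).toLinearMap)
        (LinearMap.lTensor P π.toLinearMap) ∘ₗ
      (TensorProduct.assoc k P P (P ⊗[k] P)).symm.toLinearMap = Fmap π := by
    apply TensorProduct.ext'
    intro x v
    induction v using TensorProduct.induction_on with
    | zero => simp only [tmul_zero, LinearMap.map_zero]
    | add a b ha hb => simp only [tmul_add, LinearMap.map_add, ha, hb]
    | tmul y w =>
      induction w using TensorProduct.induction_on with
      | zero => simp only [tmul_zero, LinearMap.map_zero]
      | add a b ha hb => simp only [tmul_add, LinearMap.map_add, ha, hb]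
      | tmul z w' =>
        simp [Fmap, Nmap, TensorProduct.assoc_symm_tmul,
          TensorProduct.leftComm_tmul, TensorProduct.comm_tmul,
          TensorProduct.tensorTensorTensorComm_tmul, LinearMap.mul'_apply,
          map_mul]
  have nat2 : (psi k P).rTensor A ∘ₗ LinearMap.lTensor P π.toLinearMap ∘ₗ AdM k P =
      Nmap π ∘ₗ LinearMap.lTensor P ((Coalgebra.comul (R := k)).rTensor P) := by
    apply TensorProduct.ext'
    intro x v
    induction v using TensorProduct.induction_on with
    | zero => simp only [tmul_zero, LinearMap.map_zero]
    | add a b ha hb => simp only [tmul_add, LinearMap.map_add, ha, hb]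
    | tmul y z =>
      simp [Nmap, psi, AdM_tmul, TensorProduct.leftComm_tmul,
        LinearMap.mul'_apply]
  have h0 : LinearMap.lTensor P ((Coalgebra.comul (R := k)).rTensor P) ∘ₗ
      LinearMap.lTensor P (Coalgebra.comul (R := k) (A := P)) =
      LinearMap.lTensor P (TensorProduct.assoc k P P P).symm.toLinearMap ∘ₗ
        LinearMap.lTensor P ((Coalgebra.comul (R := k)).lTensor P) ∘ₗ
        LinearMap.lTensor P (Coalgebra.comul (R := k) (A := P)) := by
    rw [← LinearMap.lTensor_comp, ← LinearMap.lTensor_comp, ← LinearMap.lTensor_comp,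
      Coalgebra.coassoc_symm]
  have hXc : LinearMap.lTensor P ((Coalgebra.comul (R := k)).rTensor P)
      ((Coalgebra.comul (R := k)).lTensor P (Coalgebra.comul u)) =
      LinearMap.lTensor P (TensorProduct.assoc k P P P).symm.toLinearMap
        (LinearMap.lTensor P ((Coalgebra.comul (R := k)).lTensor P)
          ((Coalgebra.comul (R := k)).lTensor P (Coalgebra.comul u))) := by
    have := LinearMap.congr_fun h0 (Coalgebra.comul u)
    simpa only [LinearMap.comp_apply] using this
  calc ((LinearMap.lTensor (P ⊗[k] P) (LinearMap.mul' k A)) ∘ₗ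
      (TensorProduct.tensorTensorTensorComm k P A P A).toLinearMap ∘ₗ
      (TensorProduct.map
        ((LinearMap.lTensor P π.toLinearMap) ∘ₗ (Coalgebra.comul (R := k) (A := P)))
        ((LinearMap.lTensor P π.toLinearMap) ∘ₗ (Coalgebra.comul (R := k) (A := P))))) (psi k P u)
      = ((LinearMap.lTensor (P ⊗[k] P) (LinearMap.mul' k A)) ∘ₗ
          (TensorProduct.tensorTensorTensorComm k P A P A).toLinearMap)
          ((TensorProduct.map
            (((LinearMap.lTensor P π.toLinearMap) ∘ₗ
              (Coalgebra.comul (R := k) (A := P))) ∘ₗ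
              (HopfAlgebra.antipode (R := k)))
            ((LinearMap.lTensor P π.toLinearMap) ∘ₗ
              (Coalgebra.comul (R := k) (A := P)))) (Coalgebra.comul u)) := by
        simp only [psi, LinearMap.comp_apply]
        rw [← LinearMap.comp_apply (f := TensorProduct.map _ _), map_comp_rTensor]
    _ = ((LinearMap.lTensor (P ⊗[k] P) (LinearMap.mul' k A)) ∘ₗ
          (TensorProduct.tensorTensorTensorComm k P A P A).toLinearMap)
          ((TensorProduct.map
            ((LinearMap.lTensor P π.toLinearMap) ∘ₗ
              TensorProduct.map (HopfAlgebra.antipode (R := k))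
                (HopfAlgebra.antipode (R := k)) ∘ₗ
              (TensorProduct.comm k P P).toLinearMap)
            (LinearMap.lTensor P π.toLinearMap))
            (TensorProduct.map (Coalgebra.comul (R := k) (A := P))
              (Coalgebra.comul (R := k) (A := P)) (Coalgebra.comul u))) := by
        rw [hCA, TensorProduct.map_comp]
        rfl
    _ = ((LinearMap.lTensor (P ⊗[k] P) (LinearMap.mul' k A)) ∘ₗ
          (TensorProduct.tensorTensorTensorComm k P A P A).toLinearMap)
          ((TensorProduct.map
            ((LinearMap.lTensor P π.toLinearMap) ∘ₗ
              TensorProduct.map (HopfAlgebra.antipode (R := k))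
                (HopfAlgebra.antipode (R := k)) ∘ₗ
              (TensorProduct.comm k P P).toLinearMap)
            (LinearMap.lTensor P π.toLinearMap))
            ((TensorProduct.assoc k P P (P ⊗[k] P)).symm
              (LinearMap.lTensor P (LinearMap.lTensor P (Coalgebra.comul (R := k)))
                ((Coalgebra.comul (R := k)).lTensor P (Coalgebra.comul u))))) := by
        have e5 : TensorProduct.map (Coalgebra.comul (R := k) (A := P))
            (Coalgebra.comul (R := k) (A := P)) (Coalgebra.comul u) =
            (Coalgebra.comul (R := k)).lTensor (P ⊗[k] P)
              ((TensorProduct.assoc k P P P).symm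
                ((Coalgebra.comul (R := k)).lTensor P (Coalgebra.comul u))) := by
          rw [← lTensor_comp_rTensor (f := (Coalgebra.comul (R := k) (A := P)))
            (g := (Coalgebra.comul (R := k) (A := P))), LinearMap.comp_apply,
            ← Coalgebra.coassoc_symm_apply]
        rw [e5]
        have e6 := natAssocSymm3 (k := k) (A := P) (B := P) (C := P)
          (X := P ⊗[k] P) (g := (Coalgebra.comul (R := k) (A := P)))
        have e6' := LinearMap.congr_fun e6
          ((Coalgebra.comul (R := k)).lTensor P (Coalgebra.comul u))
        simp only [LinearMap.comp_apply, LinearEquiv.coe_coe] at e6'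
        rw [e6']
    _ = Fmap π (LinearMap.lTensor P (LinearMap.lTensor P (Coalgebra.comul (R := k)))
          ((Coalgebra.comul (R := k)).lTensor P (Coalgebra.comul u))) := by
        rw [← str6]
        rfl
    _ = Nmap π (LinearMap.lTensor P ((Coalgebra.comul (R := k)).rTensor P)
          ((Coalgebra.comul (R := k)).lTensor P (Coalgebra.comul u))) := by
        rw [hXc, Fmap]
        rfl
    _ = (psi k P).rTensor A ((LinearMap.lTensor P π.toLinearMap) (AdR k P u)) := by
        have := LinearMap.congr_fun nat2
          ((Coalgebra.comul (R := k)).lTensor P (Coalgebra.comul u))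
        simp only [LinearMap.comp_apply] at this
        rw [← this, AdR_eq_AdM]

end Main

end Stmt19

open Stmt19

theorem canonical_connection_on_homogeneous_space
    {k A P : Type*} [Field k] [Ring A] [HopfAlgebra k A]
    [Ring P] [HopfAlgebra k P]
    (π : P →ₐ[k] A)
    -- π is a Hopf algebra map
    (hπΔ : (TensorProduct.map π.toLinearMap π.toLinearMap) ∘ₗ
        (Coalgebra.comul (R := k) (A := P)) =
        (Coalgebra.comul (R := k) (A := A)) ∘ₗ π.toLinearMap)
    (hπε : (Coalgebra.counit (R := k) (A := A)) ∘ₗ π.toLinearMap =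
        (Coalgebra.counit (R := k) (A := P)))
    (hπsurj : Function.Surjective π)
    -- the Ad-covariant splitting i
    (i : A →ₐ[k] P)
    (hπi : ∀ a : A, π (i a) = a)
    (hεi : (Coalgebra.counit (R := k) (A := P)) ∘ₗ i.toLinearMap =
        (Coalgebra.counit (R := k) (A := A)))
    (hAd : (LinearMap.lTensor P π.toLinearMap) ∘ₗ AdR k P ∘ₗ i.toLinearMap =
        (i.toLinearMap.rTensor A) ∘ₗ AdR k A) :
    -- pushout coaction Δ_R = (id⊗π)∘Δ on P
    let ΔR : P →ₗ[k] P ⊗[k] A :=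
      (LinearMap.lTensor P π.toLinearMap) ∘ₗ (Coalgebra.comul (R := k) (A := P))
    -- the map ~ for the pushout coaction
    let tilde : P ⊗[k] P →ₗ[k] P ⊗[k] A :=
      (LinearMap.rTensor A (LinearMap.mul' k P)) ∘ₗ
        (TensorProduct.assoc k P P A).symm.toLinearMap ∘ₗ
        (LinearMap.lTensor P ΔR)
    -- the diagonal coaction of A on one-forms P⊗P
    let diag : P ⊗[k] P →ₗ[k] (P ⊗[k] P) ⊗[k] A :=
      (LinearMap.lTensor (P ⊗[k] P) (LinearMap.mul' k A)) ∘ₗ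
        (TensorProduct.tensorTensorTensorComm k P A P A).toLinearMap ∘ₗ
        (TensorProduct.map ΔR ΔR)
    -- the canonical connection form ω(a) = Σ S(i(a)₍₁₎)·d(i(a)₍₂₎)
    let ω : A →ₗ[k] P ⊗[k] P :=
      (leftAct k P) ∘ₗ
        (TensorProduct.map (HopfAlgebra.antipode (R := k) (A := P))
          (dUniv k P)) ∘ₗ (Coalgebra.comul (R := k) (A := P)) ∘ₗ i.toLinearMap
    (tilde ∘ₗ ω =
      TensorProduct.mk k P A 1 -
        (Algebra.linearMap k (P ⊗[k] A)) ∘ₗ Coalgebra.counit) ∧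
    (diag ∘ₗ ω = (ω.rTensor A) ∘ₗ AdR k A) := by
  intro ΔR tilde diag ω
  have hεa : ∀ b : A, Coalgebra.counit (R := k) (i b) =
      Coalgebra.counit (R := k) (A := A) b := by
    intro b
    simpa using LinearMap.congr_fun hεi b
  constructor
  · -- Part 1
    apply LinearMap.ext
    intro a
    simp only [ω, tilde, ΔR, LinearMap.comp_apply]
    rw [show ((leftAct k P)
        ((TensorProduct.map (HopfAlgebra.antipode (R := k) (A := P)) (dUniv k P))
          ((Coalgebra.comul (R := k) (A := P)) (i.toLinearMap a)))) =
        ((leftAct k P) ∘ₗ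
          (TensorProduct.map (HopfAlgebra.antipode (R := k) (A := P))
            (dUniv k P)) ∘ₗ (Coalgebra.comul (R := k) (A := P)) ∘ₗ i.toLinearMap) a
      from rfl, omega_apply i a]
    simp only [map_sub, map_smul]
    have t1 := tilde_psi (k := k) π (i a)
    have t2 := tilde_one (k := k) π
    simp only [LinearMap.comp_apply] at t1 t2
    rw [t1, t2, hπi a, hεa a]
    simp [Algebra.algebraMap_eq_smul_one, Algebra.TensorProduct.one_def]
  · -- Part 2
    apply LinearMap.ext
    intro a
    simp only [ω, diag, ΔR, LinearMap.comp_apply]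
    rw [show ((leftAct k P)
        ((TensorProduct.map (HopfAlgebra.antipode (R := k) (A := P)) (dUniv k P))
          ((Coalgebra.comul (R := k) (A := P)) (i.toLinearMap a)))) =
        ((leftAct k P) ∘ₗ
          (TensorProduct.map (HopfAlgebra.antipode (R := k) (A := P))
            (dUniv k P)) ∘ₗ (Coalgebra.comul (R := k) (A := P)) ∘ₗ i.toLinearMap) a
      from rfl, omega_apply i a, hεa a]
    simp only [map_sub, map_smul]
    have d1 := diag_psi (k := k) π (i a)
    have d2 := diag_one (k := k) π
    simp only [LinearMap.comp_apply] at d1 d2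
    rw [d1, d2]
    -- right-hand side
    have hωmap : (leftAct k P) ∘ₗ
        (TensorProduct.map (HopfAlgebra.antipode (R := k) (A := P))
          (dUniv k P)) ∘ₗ (Coalgebra.comul (R := k) (A := P)) ∘ₗ i.toLinearMap =
        psi k P ∘ₗ i.toLinearMap -
          (Algebra.linearMap k (P ⊗[k] P)) ∘ₗ
            (Coalgebra.counit (R := k) (A := A)) := by
      apply LinearMap.ext
      intro b
      rw [omega_apply i b, hεa b]
      simp [Algebra.algebraMap_eq_smul_one, Algebra.TensorProduct.one_def]
    rw [hωmap, LinearMap.rTensor_sub, LinearMap.sub_apply]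
    rw [LinearMap.rTensor_comp_apply]
    have hAd' : (i.toLinearMap).rTensor A (AdR k A a) =
        LinearMap.lTensor P π.toLinearMap (AdR k P (i a)) := by
      have := LinearMap.congr_fun hAd a
      simp only [LinearMap.comp_apply, AlgHom.toLinearMap_apply] at this
      exact this.symm
    rw [hAd', LinearMap.rTensor_comp_apply, counit_rTensor_AdR]
    simp [Algebra.TensorProduct.one_def, Algebra.algebraMap_eq_smul_one,
      tmul_smul]
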